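/- arXiv:2505.02047 — 2 statements merged into one kernel-verified Lean document; each statement's English description precedes it below -/
import Mathlib

section
/- With the notation of the adjoint computation, the differential of F(U_0) = (1/Δx)∫_0^{Δx} U(x,U_0)dx is DF(U_0) = (1/Δx) Λ(0)^T, where Λ(x) is the matrix whose columns are the adjoint solutions λ_1(x),...,λ_N(x). -/
/-!
Let `d(t) = U(t, U₀ + sδ) - U(t, U₀)` and let `r(t)` be the error of the linearisation of `G`
along the trajectory from `U₀`, so that `d' = DG d + r`. The adjoint equation is exactly what
makes `(λ_j ⬝ d)' = -d_j + λ_j ⬝ r`; integrating over `[0, Δx]`, with `d(0) = sδ` and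
`λ_j(Δx) = 0`, gives `∫ d_j = s λ_j(0) ⬝ δ + ∫ λ_j ⬝ r`. It remains to see that the last integral
is `o(s)`. By Grönwall the flow is Lipschitz in its initial value (after a bootstrap keeping the
perturbed trajectory in a ball where `G` is Lipschitz), so `r = O(s)` uniformly in `t`, while
`r = o(s)` for each `t` by differentiability of `G`; dominated convergence concludes.
-/

open Set Filter Topology Metric Real Matrix MeasureTheory Asymptotics Interval
open scoped NNReal

theorem dist_le_of_trajectories_ODE_of_lipschitzOnWith_closedBall
    {E : Type*} [NormedAddCommGroup E] [NormedSpace ℝ E]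
    {v : ℝ → E → E} {f g : ℝ → E} {K : ℝ≥0} {a b r : ℝ}
    (hv : ∀ t ∈ Ico a b, LipschitzOnWith K (v t) (closedBall (f t) r))
    (hf : ContinuousOn f (Icc a b))
    (hf' : ∀ t ∈ Ico a b, HasDerivWithinAt f (v t (f t)) (Ici t) t)
    (hg : ContinuousOn g (Icc a b))
    (hg' : ∀ t ∈ Ico a b, HasDerivWithinAt g (v t (g t)) (Ici t) t)
    (hsmall : dist (f a) (g a) * exp (K * (b - a)) < r) :
    ∀ t ∈ Icc a b, dist (f t) (g t) ≤ dist (f a) (g a) * exp (K * (t - a)) := by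
  have gronwall : ∀ c ∈ Icc a b, (∀ t ∈ Ico a c, dist (f t) (g t) < r) →
      dist (f c) (g c) ≤ dist (f a) (g a) * exp (K * (c - a)) := by
    intro c hc hstay
    have hsub : Icc a c ⊆ Icc a b := Icc_subset_Icc_right hc.2
    have hsub' : Ico a c ⊆ Ico a b := Ico_subset_Ico_right hc.2
    refine dist_le_of_trajectories_ODE_of_mem (s := fun t => closedBall (f t) r)
      (fun t ht => hv t (hsub' ht)) (hf.mono hsub) (fun t ht => hf' t (hsub' ht))
      (fun t ht => mem_closedBall_self (dist_nonneg.trans (hstay t ht).le)) (hg.mono hsub)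
      (fun t ht => hg' t (hsub' ht)) (fun t ht => mem_closedBall'.2 (hstay t ht).le) le_rfl c
      ⟨hc.1, le_rfl⟩
  have hgrowth : ∀ c ∈ Icc a b, dist (f a) (g a) * exp (K * (c - a)) < r := fun c hc =>
    lt_of_le_of_lt (mul_le_mul_of_nonneg_left
      (exp_le_exp.2 (mul_le_mul_of_nonneg_left (by linarith [hc.2]) K.2)) dist_nonneg) hsmall
  have hstay : ∀ t ∈ Icc a b, dist (f t) (g t) < r := by
    by_contra! hexit
    have hclosed : IsClosed (Icc a b ∩ (fun t => dist (f t) (g t)) ⁻¹' Ici r) :=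
      (continuous_dist.comp_continuousOn (hf.prodMk hg)).preimage_isClosed_of_isClosed
        isClosed_Icc isClosed_Ici
    obtain ⟨c, ⟨hc, hcr⟩, hfirst⟩ :=
      (isCompact_Icc.of_isClosed_subset hclosed inter_subset_left).exists_isLeast hexit
    have hbefore : ∀ t ∈ Ico a c, dist (f t) (g t) < r := fun t ht => by
      by_contra! htr
      exact (hfirst ⟨⟨ht.1, ht.2.le.trans hc.2⟩, htr⟩).not_gt ht.2
    exact (lt_of_le_of_lt (gronwall c hc hbefore) (hgrowth c hc)).not_ge hcr
  exact fun c hc => gronwall c hc fun t ht => hstay t ⟨ht.1, ht.2.le.trans hc.2⟩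

theorem exists_lipschitzOnWith_closedBall_of_contDiff
    {E F : Type*} [NormedAddCommGroup E] [NormedSpace ℝ E] [ProperSpace E]
    [NormedAddCommGroup F] [NormedSpace ℝ F]
    {G : E → ℝ → F} (hG : ContDiff ℝ 1 (fun p : E × ℝ => G p.1 p.2))
    {γ : ℝ → E} {a b : ℝ} (hγ : ContinuousOn γ (Icc a b)) (r : ℝ) :
    ∃ K : ℝ≥0, ∀ t ∈ Icc a b, LipschitzOnWith K (G · t) (closedBall (γ t) r) := by
  obtain ⟨M, hM⟩ := isCompact_Icc.exists_bound_of_continuousOn hγ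
  obtain ⟨K, hK⟩ := hG.contDiffOn.exists_lipschitzOnWith (s := closedBall 0 (M + r) ×ˢ Icc a b)
    one_ne_zero ((convex_closedBall _ _).prod (convex_Icc _ _))
    ((isCompact_closedBall _ _).prod isCompact_Icc)
  refine ⟨K, fun t ht => ?_⟩
  have hmaps : MapsTo (fun u => (u, t)) (closedBall (γ t) r) (closedBall 0 (M + r) ×ˢ Icc a b) :=
    fun u hu => ⟨mem_closedBall_zero_iff.2 <|
      (norm_le_norm_add_norm_sub' u (γ t)).trans
        (add_le_add (hM t ht) (mem_closedBall_iff_norm.1 hu)), ht⟩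
  have h := hK.comp (LipschitzWith.prodMk_right t).lipschitzOnWith hmaps
  rw [mul_one] at h
  exact h

theorem continuousOn_of_hasFDerivAt_of_contDiff_uncurry
    {E F : Type*} [NormedAddCommGroup E] [NormedSpace ℝ E] [NormedAddCommGroup F] [NormedSpace ℝ F]
    {G : E → ℝ → F} (hG : ContDiff ℝ 1 (fun p : E × ℝ => G p.1 p.2))
    {γ : ℝ → E} {s : Set ℝ} (hγ : ContinuousOn γ s) {A : ℝ → E →L[ℝ] F}
    (hA : ∀ t ∈ s, HasFDerivAt (G · t) (A t) (γ t)) : ContinuousOn A s := by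
  set Gf : E × ℝ → F := fun p => G p.1 p.2
  have hJ : ContinuousOn (fun t => (fderiv ℝ Gf (γ t, t)).comp (.inl ℝ E ℝ)) s :=
    ((hG.continuous_fderiv one_ne_zero).comp_continuousOn (hγ.prodMk continuousOn_id)).clm_comp
      continuousOn_const
  refine hJ.congr fun t ht => (hA t ht).unique ?_
  exact ((hG.differentiable one_ne_zero) (γ t, t)).hasFDerivAt.comp (γ t)
    (hasFDerivAt_prodMk_left (𝕜 := ℝ) (γ t) t)

theorem exists_eventually_dist_flow_le
    {E : Type*} [NormedAddCommGroup E] [NormedSpace ℝ E] [ProperSpace E]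
    {G : E → ℝ → E} (hG : ContDiff ℝ 1 (fun p : E × ℝ => G p.1 p.2))
    {U : ℝ → E → E} {a b : ℝ}
    (hU : ∀ u, ∀ t ∈ Icc a b, HasDerivWithinAt (U · u) (G (U t u) t) (Icc a b) t)
    (hUa : ∀ u, U a u = u) (u₀ : E) :
    ∃ C, ∀ᶠ u in 𝓝 u₀, ∀ t ∈ Icc a b, dist (U t u) (U t u₀) ≤ C * dist u u₀ := by
  have hcont : ∀ u, ContinuousOn (U · u) (Icc a b) := fun u t ht => (hU u t ht).continuousWithinAt
  have hright : ∀ u, ∀ t ∈ Ico a b, HasDerivWithinAt (U · u) (G (U t u) t) (Ici t) t :=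
    fun u t ht => (hU u t (Ico_subset_Icc_self ht)).mono_of_mem_nhdsWithin
      (Icc_mem_nhdsGE_of_mem ht)
  obtain ⟨K, hK⟩ := exists_lipschitzOnWith_closedBall_of_contDiff hG (hcont u₀) 1
  refine ⟨exp (K * (b - a)), ?_⟩
  have hnear : ∀ᶠ u in 𝓝 u₀, dist u u₀ * exp (K * (b - a)) < 1 :=
    (((continuous_id.dist continuous_const).mul continuous_const).tendsto' u₀ 0
      (by simp)).eventually (gt_mem_nhds one_pos)
  filter_upwards [hnear] with u hu t ht
  have h := dist_le_of_trajectories_ODE_of_lipschitzOnWith_closedBall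
    (fun t ht => hK t (Ico_subset_Icc_self ht)) (hcont u₀) (hright u₀) (hcont u) (hright u)
    (by rwa [hUa, hUa, dist_comm]) t ht
  rw [hUa, hUa, dist_comm u₀, dist_comm (U t u₀)] at h
  calc dist (U t u) (U t u₀) ≤ dist u u₀ * exp (K * (t - a)) := h
    _ ≤ dist u u₀ * exp (K * (b - a)) := by gcongr; exact ht.2
    _ = exp (K * (b - a)) * dist u u₀ := mul_comm _ _

section Linearization

variable {E : Type*} [NormedAddCommGroup E] [NormedSpace ℝ E]
  {G : E → ℝ → E} {U : ℝ → E → E} {A : ℝ → E →L[ℝ] E} {a b : ℝ} {u₀ : E}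

def linearizationRemainder (G : E → ℝ → E) (U : ℝ → E → E) (A : ℝ → E →L[ℝ] E) (u₀ u : E)
    (t : ℝ) : E :=
  G (U t u) t - G (U t u₀) t - A t (U t u - U t u₀)

theorem continuousOn_linearizationRemainder
    (hG : ContDiff ℝ 1 (fun p : E × ℝ => G p.1 p.2))
    (hU : ∀ u, ∀ t ∈ Icc a b, HasDerivWithinAt (U · u) (G (U t u) t) (Icc a b) t)
    (hA : ∀ t ∈ Icc a b, HasFDerivAt (G · t) (A t) (U t u₀)) (u : E) :
    ContinuousOn (linearizationRemainder G U A u₀ u) (Icc a b) := by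
  have hUcont : ∀ u, ContinuousOn (U · u) (Icc a b) := fun u t ht =>
    (hU u t ht).continuousWithinAt
  have hGcont : ∀ u, ContinuousOn (fun t => G (U t u) t) (Icc a b) := fun u =>
    hG.continuous.comp_continuousOn ((hUcont u).prodMk continuousOn_id)
  exact ((hGcont u).sub (hGcont u₀)).sub
    ((continuousOn_of_hasFDerivAt_of_contDiff_uncurry hG (hUcont u₀) hA).clm_apply
      ((hUcont u).sub (hUcont u₀)))

variable [ProperSpace E]

theorem exists_eventually_norm_linearizationRemainder_le
    (hG : ContDiff ℝ 1 (fun p : E × ℝ => G p.1 p.2))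
    (hU : ∀ u, ∀ t ∈ Icc a b, HasDerivWithinAt (U · u) (G (U t u) t) (Icc a b) t)
    (hUa : ∀ u, U a u = u) (hA : ∀ t ∈ Icc a b, HasFDerivAt (G · t) (A t) (U t u₀)) :
    ∃ C, ∀ᶠ u in 𝓝 u₀, ∀ t ∈ Icc a b,
      ‖linearizationRemainder G U A u₀ u t‖ ≤ C * ‖u - u₀‖ := by
  obtain ⟨K, hK⟩ := exists_lipschitzOnWith_closedBall_of_contDiff hG
    (fun t ht => (hU u₀ t ht).continuousWithinAt) 1
  obtain ⟨C, hC⟩ := exists_eventually_dist_flow_le hG hU hUa u₀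
  have hnear : ∀ᶠ u in 𝓝 u₀, C * dist u u₀ < 1 :=
    ((continuous_const.mul (continuous_id.dist continuous_const)).tendsto' u₀ 0
      (by simp)).eventually (gt_mem_nhds one_pos)
  refine ⟨2 * K * C, ?_⟩
  filter_upwards [hC, hnear] with u hu hu' t ht
  have hclose : dist (U t u) (U t u₀) ≤ 1 := (hu t ht).trans hu'.le
  have hAK : ‖A t‖ ≤ K := (hA t ht).le_of_lipschitzOn (closedBall_mem_nhds _ one_pos) (hK t ht)
  have hd : ‖U t u - U t u₀‖ ≤ C * ‖u - u₀‖ := by simpa only [dist_eq_norm] using hu t ht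
  calc ‖linearizationRemainder G U A u₀ u t‖
      ≤ ‖G (U t u) t - G (U t u₀) t‖ + ‖A t (U t u - U t u₀)‖ := norm_sub_le _ _
    _ ≤ K * ‖U t u - U t u₀‖ + K * ‖U t u - U t u₀‖ := by
        gcongr
        · exact (hK t ht).norm_sub_le hclose (mem_closedBall_self zero_le_one)
        · exact (A t).le_of_opNorm_le hAK _
    _ ≤ 2 * K * C * ‖u - u₀‖ := by nlinarith [K.2]

theorem isLittleO_linearizationRemainder
    (hG : ContDiff ℝ 1 (fun p : E × ℝ => G p.1 p.2))
    (hU : ∀ u, ∀ t ∈ Icc a b, HasDerivWithinAt (U · u) (G (U t u) t) (Icc a b) t)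
    (hUa : ∀ u, U a u = u) (hA : ∀ t ∈ Icc a b, HasFDerivAt (G · t) (A t) (U t u₀))
    {t : ℝ} (ht : t ∈ Icc a b) :
    (linearizationRemainder G U A u₀ · t) =o[𝓝 u₀] (· - u₀) := by
  obtain ⟨C, hC⟩ := exists_eventually_dist_flow_le hG hU hUa u₀
  have hflow : (fun u => U t u - U t u₀) =O[𝓝 u₀] (· - u₀) :=
    .of_bound C (hC.mono fun u hu => by simpa only [dist_eq_norm] using hu t ht)
  have hlim : Tendsto (U t) (𝓝 u₀) (𝓝 (U t u₀)) :=
    tendsto_sub_nhds_zero_iff.1 (hflow.trans_tendsto (tendsto_sub_nhds_zero_iff.2 tendsto_id))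
  exact ((hA t ht).isLittleO.comp_tendsto hlim).trans_isBigO hflow

end Linearization

theorem HasDerivWithinAt.dotProduct {n : Type*} [Fintype n] {f g : ℝ → n → ℝ} {f' g' : n → ℝ}
    {s : Set ℝ} {t : ℝ} (hf : HasDerivWithinAt f f' s t) (hg : HasDerivWithinAt g g' s t) :
    HasDerivWithinAt (fun τ => f τ ⬝ᵥ g τ) (f' ⬝ᵥ g t + f t ⬝ᵥ g') s t := by
  unfold _root_.dotProduct
  rw [← Finset.sum_add_distrib]
  exact HasDerivWithinAt.fun_sum fun i _ =>
    (hasDerivWithinAt_pi.1 hf i).mul (hasDerivWithinAt_pi.1 hg i)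

theorem abs_dotProduct_le {n : Type*} [Fintype n] (v w : n → ℝ) :
    |v ⬝ᵥ w| ≤ Fintype.card n * ‖v‖ * ‖w‖ := by
  calc |v ⬝ᵥ w| ≤ ∑ i, |v i| * |w i| := by
        simpa only [dotProduct, abs_mul] using
          Finset.abs_sum_le_sum_abs (fun i => v i * w i) Finset.univ
    _ ≤ ∑ _i : n, ‖v‖ * ‖w‖ := Finset.sum_le_sum fun i _ =>
        mul_le_mul (norm_le_pi_norm v i) (norm_le_pi_norm w i) (abs_nonneg _) (norm_nonneg _)
    _ = Fintype.card n * ‖v‖ * ‖w‖ := by simp [mul_assoc]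

theorem integral_dotProduct_eq_of_adjoint {n : Type*} [Fintype n] {a b : ℝ} (hab : a ≤ b)
    {A : ℝ → Matrix n n ℝ} {c : n → ℝ} {d r μ : ℝ → n → ℝ}
    (hd : ∀ t ∈ Icc a b, HasDerivWithinAt d (A t *ᵥ d t + r t) (Icc a b) t)
    (hμ : ∀ t ∈ Icc a b, HasDerivWithinAt μ (-c - (A t)ᵀ *ᵥ μ t) (Icc a b) t)
    (hr : IntervalIntegrable (fun t => μ t ⬝ᵥ r t) volume a b) :
    ∫ t in a..b, c ⬝ᵥ d t = μ a ⬝ᵥ d a - μ b ⬝ᵥ d b + ∫ t in a..b, μ t ⬝ᵥ r t := by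
  have hderiv : ∀ t ∈ Icc a b, HasDerivWithinAt (fun τ => μ τ ⬝ᵥ d τ)
      (-(c ⬝ᵥ d t) + μ t ⬝ᵥ r t) (Icc a b) t := fun t ht => by
    convert (hμ t ht).dotProduct (hd t ht) using 1
    rw [mulVec_transpose, sub_dotProduct, dotProduct_add, dotProduct_mulVec, neg_dotProduct]
    ring
  have hcd : IntervalIntegrable (fun t => c ⬝ᵥ d t) volume a b :=
    ContinuousOn.intervalIntegrable_of_Icc hab fun t ht =>
      ((hasDerivWithinAt_const t _ c).dotProduct (hd t ht)).continuousWithinAt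
  have hftc := intervalIntegral.integral_eq_sub_of_hasDerivAt_of_le hab
    (fun t ht => (hderiv t ht).continuousWithinAt)
    (fun t ht => (hderiv t (Ioo_subset_Icc_self ht)).hasDerivAt (Icc_mem_nhds ht.1 ht.2))
    (hcd.neg.add hr)
  rw [intervalIntegral.integral_add (f := fun t => -(c ⬝ᵥ d t)) hcd.neg hr,
    intervalIntegral.integral_neg] at hftc
  linarith

theorem isLittleO_intervalIntegral_of_forall_isLittleO {ι : Type*} {l : Filter ι}
    [l.IsCountablyGenerated] {f : ι → ℝ → ℝ} {g : ι → ℝ} {a b B : ℝ} (hab : a ≤ b)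
    (hf : ∀ᶠ s in l, ContinuousOn (f s) (Icc a b))
    (hbound : ∀ᶠ s in l, ∀ t ∈ Icc a b, |f s t| ≤ B * |g s|)
    (hlim : ∀ t ∈ Icc a b, (f · t) =o[l] g) :
    (fun s => ∫ t in a..b, f s t) =o[l] g := by
  have hvanish : ∀ᶠ s in l, g s = 0 → ∀ t ∈ Icc a b, f s t = 0 := by
    filter_upwards [hbound] with s hs hgs t ht
    simpa [hgs] using hs t ht
  have hIoc : Ι a b ⊆ Icc a b := by rw [uIoc_of_le hab]; exact Ioc_subset_Icc_self
  rw [isLittleO_iff_tendsto']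
  · simp only [← intervalIntegral.integral_div]
    simpa using intervalIntegral.tendsto_integral_filter_of_dominated_convergence
      (f := fun _ => 0) (fun _ => |B|)
      (hf.mono fun s hs => ((hs.div_const (g s)).mono hIoc).aestronglyMeasurable measurableSet_uIoc)
      (hbound.mono fun s hs => ae_of_all _ fun t ht => by
        rw [norm_div, Real.norm_eq_abs, Real.norm_eq_abs]
        exact div_le_of_le_mul₀ (abs_nonneg _) (abs_nonneg B)
          ((hs t (hIoc ht)).trans (mul_le_mul_of_nonneg_right (le_abs_self B) (abs_nonneg _))))
      intervalIntegrable_const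
      (ae_of_all _ fun t ht => (isLittleO_iff_tendsto' (hvanish.mono fun s hs hgs =>
        hs hgs t (hIoc ht))).1 (hlim t (hIoc ht)))
  · filter_upwards [hvanish] with s hs hgs
    rw [intervalIntegral.integral_congr (g := fun _ => 0) fun t ht =>
      hs hgs t (by rwa [uIcc_of_le hab] at ht)]
    simp

theorem isLittleO_integral_dotProduct_linearizationRemainder {n : Type*} [Fintype n]
    {G : (n → ℝ) → ℝ → (n → ℝ)} (hG : ContDiff ℝ 1 (fun p : (n → ℝ) × ℝ => G p.1 p.2))
    {U : ℝ → (n → ℝ) → (n → ℝ)} {a b : ℝ} (hab : a ≤ b)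
    (hU : ∀ u, ∀ t ∈ Icc a b, HasDerivWithinAt (U · u) (G (U t u) t) (Icc a b) t)
    (hUa : ∀ u, U a u = u) {u₀ : n → ℝ} {A : ℝ → (n → ℝ) →L[ℝ] (n → ℝ)}
    (hA : ∀ t ∈ Icc a b, HasFDerivAt (G · t) (A t) (U t u₀))
    {μ : ℝ → n → ℝ} (hμ : ContinuousOn μ (Icc a b)) (δ : n → ℝ) :
    (fun s : ℝ => ∫ t in a..b, μ t ⬝ᵥ linearizationRemainder G U A u₀ (u₀ + s • δ) t)
      =o[𝓝 0] id := by
  have hline : Tendsto (fun s : ℝ => u₀ + s • δ) (𝓝 0) (𝓝 u₀) :=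
    (continuous_const.add (continuous_id.smul continuous_const)).tendsto' 0 u₀ (by simp)
  have hline_sub : ∀ s : ℝ, ‖u₀ + s • δ - u₀‖ = ‖δ‖ * ‖s‖ := fun s => by
    rw [add_sub_cancel_left, norm_smul, mul_comm]
  have hpair_le : ∀ (s : ℝ) t, |μ t ⬝ᵥ linearizationRemainder G U A u₀ (u₀ + s • δ) t| ≤
      Fintype.card n * ‖μ t‖ * ‖linearizationRemainder G U A u₀ (u₀ + s • δ) t‖ :=
    fun s t => abs_dotProduct_le _ _
  obtain ⟨C, hC⟩ := exists_eventually_norm_linearizationRemainder_le hG hU hUa hA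
  obtain ⟨M, hM⟩ := isCompact_Icc.exists_bound_of_continuousOn hμ
  have hM0 : 0 ≤ M := (norm_nonneg _).trans (hM a ⟨le_rfl, hab⟩)
  refine isLittleO_intervalIntegral_of_forall_isLittleO (B := Fintype.card n * M * (C * ‖δ‖)) hab
    (.of_forall fun s => (continuous_fst.dotProduct continuous_snd).comp_continuousOn
      (hμ.prodMk (continuousOn_linearizationRemainder hG hU hA _))) ?_ fun t ht => ?_
  · filter_upwards [hline.eventually hC] with s hs t ht
    calc _ ≤ Fintype.card n * ‖μ t‖ * ‖linearizationRemainder G U A u₀ (u₀ + s • δ) t‖ :=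
          hpair_le s t
      _ ≤ Fintype.card n * M * (C * ‖u₀ + s • δ - u₀‖) :=
          mul_le_mul (mul_le_mul_of_nonneg_left (hM t ht) (Nat.cast_nonneg _)) (hs t ht)
            (norm_nonneg _) (mul_nonneg (Nat.cast_nonneg _) hM0)
      _ = Fintype.card n * M * (C * ‖δ‖) * |s| := by rw [hline_sub, Real.norm_eq_abs]; ring
  · exact (isBigO_of_le' _ fun s => hpair_le s t).trans_isLittleO
      (((isLittleO_linearizationRemainder hG hU hUa hA ht).comp_tendsto hline).trans_isBigO
        (isBigO_of_le' _ fun s => (hline_sub s).le))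

theorem hasDerivAt_integral_dotProduct_flow_of_adjoint {n : Type*} [Fintype n] [DecidableEq n]
    {G : (n → ℝ) → ℝ → (n → ℝ)} (hG : ContDiff ℝ 1 (fun p : (n → ℝ) × ℝ => G p.1 p.2))
    {U : ℝ → (n → ℝ) → (n → ℝ)} {a b : ℝ} (hab : a ≤ b)
    (hU : ∀ u, ∀ t ∈ Icc a b, HasDerivWithinAt (U · u) (G (U t u) t) (Icc a b) t)
    (hUa : ∀ u, U a u = u) {u₀ : n → ℝ} {A : ℝ → Matrix n n ℝ}
    (hA : ∀ t ∈ Icc a b,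
      HasFDerivAt (G · t) (LinearMap.toContinuousLinearMap (toLin' (A t))) (U t u₀))
    {c : n → ℝ} {μ : ℝ → n → ℝ}
    (hμ : ∀ t ∈ Icc a b, HasDerivWithinAt μ (-c - (A t)ᵀ *ᵥ μ t) (Icc a b) t) (hμb : μ b = 0)
    (δ : n → ℝ) :
    HasDerivAt (fun s : ℝ => ∫ t in a..b, c ⬝ᵥ U t (u₀ + s • δ)) (μ a ⬝ᵥ δ) 0 := by
  set A' : ℝ → (n → ℝ) →L[ℝ] (n → ℝ) := fun t => LinearMap.toContinuousLinearMap (toLin' (A t))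
  have hμcont : ContinuousOn μ (Icc a b) := fun t ht => (hμ t ht).continuousWithinAt
  have hcU : ∀ u, IntervalIntegrable (fun t => c ⬝ᵥ U t u) volume a b := fun u =>
    ((continuous_const.dotProduct continuous_id).comp_continuousOn
      fun t ht => (hU u t ht).continuousWithinAt).intervalIntegrable_of_Icc hab
  have hidentity : ∀ s : ℝ, (∫ t in a..b, c ⬝ᵥ U t (u₀ + s • δ)) -
      (∫ t in a..b, c ⬝ᵥ U t u₀) - s * (μ a ⬝ᵥ δ) =
        ∫ t in a..b, μ t ⬝ᵥ linearizationRemainder G U A' u₀ (u₀ + s • δ) t := by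
    intro s
    have hd : ∀ t ∈ Icc a b, HasDerivWithinAt (fun t => U t (u₀ + s • δ) - U t u₀)
        (A t *ᵥ (U t (u₀ + s • δ) - U t u₀) + linearizationRemainder G U A' u₀ (u₀ + s • δ) t)
        (Icc a b) t := fun t ht => by
      refine ((hU (u₀ + s • δ) t ht).fun_sub (hU u₀ t ht)).congr_deriv ?_
      rw [linearizationRemainder]
      exact (add_sub_cancel _ _).symm
    have h := integral_dotProduct_eq_of_adjoint hab hd hμ
      (((continuous_fst.dotProduct continuous_snd).comp_continuousOn (hμcont.prodMk
        (continuousOn_linearizationRemainder hG hU hA _))).intervalIntegrable_of_Icc hab)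
    rw [hUa, hUa, hμb, zero_dotProduct, add_sub_cancel_left, dotProduct_smul] at h
    simp only [dotProduct_sub] at h
    rw [intervalIntegral.integral_sub (hcU _) (hcU _)] at h
    rw [h, smul_eq_mul, sub_zero]
    ring
  rw [hasDerivAt_iff_isLittleO_nhds_zero]
  simp only [zero_add, zero_smul, add_zero, smul_eq_mul, hidentity]
  exact isLittleO_integral_dotProduct_linearizationRemainder hG hab hU hUa hA hμcont δ

open MeasureTheory in
theorem stmt_4_general (N : ℕ) (Δx : ℝ) (hΔx : 0 < Δx)
    (G : (Fin N → ℝ) → ℝ → (Fin N → ℝ))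
    (hG : ContDiff ℝ 1 (fun p : (Fin N → ℝ) × ℝ => G p.1 p.2))
    (U : ℝ → (Fin N → ℝ) → (Fin N → ℝ)) (U₀ : Fin N → ℝ)
    (hUode : ∀ u₀, ∀ x ∈ Set.Icc 0 Δx,
      HasDerivWithinAt (fun t => U t u₀) (G (U x u₀) x) (Set.Icc 0 Δx) x)
    (hUinit : ∀ u₀, U 0 u₀ = u₀)
    -- Jacobian of G with respect to U along the trajectory
    (DG : ℝ → Matrix (Fin N) (Fin N) ℝ)
    (hDG : ∀ x ∈ Set.Icc 0 Δx,
      HasFDerivAt (fun u => G u x)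
        (LinearMap.toContinuousLinearMap (Matrix.toLin' (DG x))) (U x U₀))
    -- adjoint solutions λ_j, j = 1,…,N
    (lam : Fin N → ℝ → Fin N → ℝ)
    (hlam_ode : ∀ j, ∀ x ∈ Set.Icc 0 Δx, ∀ i,
      HasDerivWithinAt (fun t => lam j t i)
        (-(if i = j then (1:ℝ) else 0) - ∑ k, DG x k i * lam j x k) (Set.Icc 0 Δx) x)
    (hlam_end : ∀ j, lam j Δx = 0)
    -- F and its Fréchet derivative
    (F : (Fin N → ℝ) → (Fin N → ℝ))
    (hF : ∀ u₀, F u₀ = (Δx)⁻¹ • ∫ x in (0:ℝ)..Δx, U x u₀)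
    (L : (Fin N → ℝ) →L[ℝ] (Fin N → ℝ)) (hL : HasFDerivAt F L U₀) :
    ∀ δ j, L δ j = (Δx)⁻¹ * ∑ i, lam j 0 i * δ i := by
  intro δ j
  have hadjoint : ∀ x ∈ Icc 0 Δx, HasDerivWithinAt (lam j)
      (-Pi.single j 1 - (DG x)ᵀ *ᵥ lam j x) (Icc 0 Δx) x := fun x hx =>
    hasDerivWithinAt_pi.2 fun i => by
      simpa [Pi.single_apply, mulVec, dotProduct] using hlam_ode j x hx i
  have hintegral : HasDerivAt (fun s : ℝ => ∫ t in (0:ℝ)..Δx, U t (U₀ + s • δ) j)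
      (lam j 0 ⬝ᵥ δ) 0 := by
    simpa only [single_one_dotProduct] using hasDerivAt_integral_dotProduct_flow_of_adjoint
      hG hΔx.le hUode hUinit hDG hadjoint (hlam_end j) δ
  have hF_line : (fun s : ℝ => F (U₀ + s • δ) j) =
      fun s => Δx⁻¹ * ∫ t in (0:ℝ)..Δx, U t (U₀ + s • δ) j := by
    funext s
    have hint : IntervalIntegrable (U · (U₀ + s • δ)) volume 0 Δx :=
      ContinuousOn.intervalIntegrable_of_Icc hΔx.le fun t ht => (hUode _ t ht).continuousWithinAt
    rw [hF, Pi.smul_apply, smul_eq_mul]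
    exact congrArg _ ((ContinuousLinearMap.proj (R := ℝ) (φ := fun _ : Fin N => ℝ) j)
      |>.intervalIntegral_comp_comm hint).symm
  have hL_line : HasDerivAt (fun s : ℝ => F (U₀ + s • δ) j) (L δ j) 0 := by
    have hline : HasDerivAt (fun s : ℝ => U₀ + s • δ) δ 0 := by
      simpa using ((hasDerivAt_id (0:ℝ)).smul_const δ).const_add U₀
    have hL0 : HasFDerivAt F L (U₀ + (0:ℝ) • δ) := by simpa using hL
    exact hasDerivAt_pi.1 (hL0.comp_hasDerivAt 0 hline) j
  rw [hF_line] at hL_line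
  exact hL_line.unique (hintegral.const_mul Δx⁻¹)

open MeasureTheory in
/-- The differential of `F(U₀) = (1/Δx)∫₀^{Δx} U(x,U₀) dx` is `DF(U₀) = (1/Δx) Λ(0)ᵀ`,
where the columns of `Λ` are the adjoint solutions `λ₁,...,λ_N`. -/
theorem stmt_4 (N : ℕ) (Δx : ℝ) (hΔx : 0 < Δx)
    (G : (Fin N → ℝ) → ℝ → (Fin N → ℝ))
    (hG : ContDiff ℝ 1 (fun p : (Fin N → ℝ) × ℝ => G p.1 p.2))
    (U : ℝ → (Fin N → ℝ) → (Fin N → ℝ)) (U₀ : Fin N → ℝ)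
    (hUode : ∀ u₀, ∀ x ∈ Set.Icc 0 Δx,
      HasDerivWithinAt (fun t => U t u₀) (G (U x u₀) x) (Set.Icc 0 Δx) x)
    (hUinit : ∀ u₀, U 0 u₀ = u₀)
    -- derivative of the flow with respect to the parameter, in each direction δ
    (V : (Fin N → ℝ) → ℝ → Fin N → ℝ)
    (hV : ∀ δ, ∀ x ∈ Set.Icc 0 Δx,
      HasDerivAt (fun s : ℝ => U x (U₀ + s • δ)) (V δ x) 0)
    -- Jacobian of G with respect to U along the trajectory
    (DG : ℝ → Matrix (Fin N) (Fin N) ℝ)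
    (hDG : ∀ x ∈ Set.Icc 0 Δx,
      HasFDerivAt (fun u => G u x)
        (LinearMap.toContinuousLinearMap (Matrix.toLin' (DG x))) (U x U₀))
    -- adjoint solutions λ_j, j = 1,…,N
    (lam : Fin N → ℝ → Fin N → ℝ)
    (hlam_ode : ∀ j, ∀ x ∈ Set.Icc 0 Δx, ∀ i,
      HasDerivWithinAt (fun t => lam j t i)
        (-(if i = j then (1:ℝ) else 0) - ∑ k, DG x k i * lam j x k) (Set.Icc 0 Δx) x)
    (hlam_end : ∀ j, lam j Δx = 0)
    -- differentiation under the integral sign is valid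
    (hswap : ∀ δ j, HasDerivAt (fun s : ℝ => ∫ x in (0:ℝ)..Δx, U x (U₀ + s • δ) j)
      (∫ x in (0:ℝ)..Δx, V δ x j) 0)
    -- F and its Fréchet derivative
    (F : (Fin N → ℝ) → (Fin N → ℝ))
    (hF : ∀ u₀, F u₀ = (Δx)⁻¹ • ∫ x in (0:ℝ)..Δx, U x u₀)
    (L : (Fin N → ℝ) →L[ℝ] (Fin N → ℝ)) (hL : HasFDerivAt F L U₀) :
    ∀ δ j, L δ j = (Δx)⁻¹ * ∑ i, lam j 0 i * δ i :=
  stmt_4_general N Δx hΔx G hG U U₀ hUode hUinit DG hDG lam hlam_ode hlam_end F hF L hL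
end

section
/- Consider the semidiscrete scheme dU_i/dt = -(1/Δx)[F_{i+1/2} - f(U*_{i+1/2}) - F_{i-1/2} + f(U*_{i-1/2})] + Σ_l α_l^i (S(P_l^i) - S(U*_{h,l}^i)) H_x(x_l^i). If the initial cell averages are those of a stationary solution (computed with the same quadrature and ODE solver used in the reconstruction), then the reconstruction yields P_l^i = U*_{h,l}^i and U^±_{i∓1/2} = U*_{i∓1/2} at every interface, the numerical flux consistency gives F_{i+1/2} = f(U*_{i+1/2}), and consequently dU_i/dt = 0 for all i. -/
/-- Well-balancedness of the semidiscrete scheme: if the cell averages are those of a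
(discrete) stationary solution, the reconstruction returns the stationary values, the
consistent numerical flux reduces to the exact flux, and the right-hand side of the
scheme vanishes: `dUᵢ/dt = 0` for all `i`. -/
theorem stmt_17 (N : ℕ) (Δx : ℝ) (hΔx : 0 < Δx) (M : ℕ)
    -- flux, source, H_x
    (f S : (Fin N → ℝ) → (Fin N → ℝ)) (Hx : ℝ → ℝ)
    -- quadrature weights and nodes on each cell, interface points
    (α : ℤ → Fin (M + 1) → ℝ) (xq : ℤ → Fin (M + 1) → ℝ) (xif : ℤ → ℝ)
    -- consistent numerical flux
    (Fnum : (Fin N → ℝ) → (Fin N → ℝ) → (Fin N → ℝ))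
    (hcons : ∀ v, Fnum v v = f v)
    -- discrete stationary solution: interface values and quadrature-point values
    (UstarIf : ℤ → (Fin N → ℝ)) (UstarQ : ℤ → Fin (M + 1) → (Fin N → ℝ))
    -- cell averages computed from the stationary solution with the same quadrature
    (Uavg : ℤ → (Fin N → ℝ))
    (hUavg : ∀ j, Uavg j = ∑ l, α j l • UstarQ j l)
    -- the standard reconstruction operator of each cell reproduces zero exactly
    (Q : ℤ → (ℤ → (Fin N → ℝ)) → ℝ → (Fin N → ℝ))
    (hQ0 : ∀ i t, Q i (fun _ => 0) t = 0)
    -- reconstructed interface states and quadrature-point values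
    (UL UR : ℤ → (Fin N → ℝ)) (P : ℤ → Fin (M + 1) → (Fin N → ℝ))
    (hUL : ∀ i, UL i = UstarIf i +
      Q i (fun j => Uavg j - ∑ l, α j l • UstarQ j l) (xif i))
    (hUR : ∀ i, UR i = UstarIf i +
      Q (i + 1) (fun j => Uavg j - ∑ l, α j l • UstarQ j l) (xif i))
    (hPdef : ∀ i l, P i l = UstarQ i l +
      Q i (fun j => Uavg j - ∑ l, α j l • UstarQ j l) (xq i l))
    -- right-hand side of the semidiscrete well-balanced scheme
    (dUdt : ℤ → (Fin N → ℝ))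
    (hdUdt : ∀ i, dUdt i =
      -(Δx)⁻¹ • (Fnum (UL i) (UR i) - f (UstarIf i)
        - Fnum (UL (i - 1)) (UR (i - 1)) + f (UstarIf (i - 1)))
      + ∑ l, (α i l * Hx (xq i l)) • (S (P i l) - S (UstarQ i l))) :
    (∀ i l, P i l = UstarQ i l) ∧
    (∀ i, UL i = UstarIf i ∧ UR i = UstarIf i) ∧
    (∀ i, Fnum (UL i) (UR i) = f (UstarIf i)) ∧
    (∀ i, dUdt i = 0) := by
  have hz : (fun j => Uavg j - ∑ l, α j l • UstarQ j l) = fun _ => 0 := by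
    funext j; rw [hUavg j]; simp
  have hP : ∀ i l, P i l = UstarQ i l := by
    intro i l; rw [hPdef, hz, hQ0]; simp
  have hL : ∀ i, UL i = UstarIf i := by
    intro i; rw [hUL, hz, hQ0]; simp
  have hR : ∀ i, UR i = UstarIf i := by
    intro i; rw [hUR, hz, hQ0]; simp
  have hF : ∀ i, Fnum (UL i) (UR i) = f (UstarIf i) := by
    intro i; rw [hL, hR, hcons]
  refine ⟨hP, fun i => ⟨hL i, hR i⟩, hF, fun i => ?_⟩
  rw [hdUdt, hF, hF]
  simp [hP]
end
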